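/- The DPG gradient identity: ∇_θ D_KL(p, π_θ) = −(1/Z) E_{x∼π_θ}[(P(x)/π_θ(x)) ∇_θ log π_θ(x)], where p(x) = P(x)/Z and Z = Σ_x P(x). -/

import Mathlib

/-!
Since `log (p / π_θ) = log p - log π_θ`, only the cross-entropy term depends on `θ`, so the
gradient is `-∑ₓ p x ∇ log π_θ x`; the importance weight `P x / π_θ x` cancels against the
sampling probability `π_θ x`, leaving `p x = P x / Z`.
-/

namespace Real

theorem mul_log_div_eq_sub {b : ℝ} (a : ℝ) (hb : b ≠ 0) :
    a * log (a / b) = a * log a - a * log b := by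
  rcases eq_or_ne a 0 with rfl | ha
  · simp
  · rw [log_div ha hb, mul_sub]

end Real

section KLGradient

variable {X E : Type*} [Fintype X] [NormedAddCommGroup E] [NormedSpace ℝ E]

theorem hasFDerivAt_sum_mul_log_div (q : X → ℝ) (f : E → X → ℝ) (hf : ∀ θ x, f θ x ≠ 0)
    {θ : E} (hdiff : ∀ x, DifferentiableAt ℝ (fun θ' => f θ' x) θ) :
    HasFDerivAt (fun θ' => ∑ x, q x * Real.log (q x / f θ' x))
      (-∑ x, q x • fderiv ℝ (fun θ' => Real.log (f θ' x)) θ) θ := by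
  have hlog : ∀ x, HasFDerivAt (fun θ' => Real.log (f θ' x))
      (fderiv ℝ (fun θ' => Real.log (f θ' x)) θ) θ :=
    fun x => ((hdiff x).log (hf θ x)).hasFDerivAt
  simp_rw [Real.mul_log_div_eq_sub _ (hf _ _), ← Finset.sum_neg_distrib]
  exact HasFDerivAt.fun_sum fun x _ => ((hlog x).const_mul (q x)).const_sub _

end KLGradient

theorem dpg_gradient_identity_general
    {X : Type*} [Fintype X] {d : ℕ}
    (P : X → ℝ)
    (Z : ℝ)
    (p : X → ℝ) (hp : ∀ x, p x = P x / Z)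
    (π : (Fin d → ℝ) → X → ℝ)
    (hpos : ∀ θ x, 0 < π θ x)
    (hdiff : ∀ x, Differentiable ℝ (fun θ => π θ x))
    (θ : Fin d → ℝ) :
    fderiv ℝ (fun θ' => ∑ x, p x * Real.log (p x / π θ' x)) θ
      = -((1 / Z) •
          ∑ x, π θ x • ((P x / π θ x) • fderiv ℝ (fun θ' => Real.log (π θ' x)) θ)) := by
  have hπ : ∀ θ x, π θ x ≠ 0 := fun θ x => (hpos θ x).ne'
  rw [(hasFDerivAt_sum_mul_log_div p π hπ fun x => (hdiff x).differentiableAt).fderiv]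
  simp_rw [smul_smul, mul_div_cancel₀ _ (hπ θ _), Finset.smul_sum, smul_smul, hp,
    one_div_mul_eq_div]

/-- The DPG gradient identity:
`∇_θ D_KL(p, π_θ) = −(1/Z) E_{x∼π_θ}[(P(x)/π_θ(x)) ∇_θ log π_θ(x)]`. -/
theorem dpg_gradient_identity
    {X : Type*} [Fintype X] {d : ℕ}
    (P : X → ℝ) (hP : ∀ x, 0 < P x)
    (Z : ℝ) (hZ : Z = ∑ x, P x)
    (p : X → ℝ) (hp : ∀ x, p x = P x / Z)
    (π : (Fin d → ℝ) → X → ℝ)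
    (hpos : ∀ θ x, 0 < π θ x) (hle : ∀ θ x, π θ x ≤ 1)
    (hsum : ∀ θ, ∑ x, π θ x = 1)
    (hdiff : ∀ x, Differentiable ℝ (fun θ => π θ x))
    (θ : Fin d → ℝ) :
    fderiv ℝ (fun θ' => ∑ x, p x * Real.log (p x / π θ' x)) θ
      = -((1 / Z) •
          ∑ x, π θ x • ((P x / π θ x) • fderiv ℝ (fun θ' => Real.log (π θ' x)) θ)) :=
  dpg_gradient_identity_general P Z p hp π hpos hdiff θ
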